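/- arXiv:1402.3766 — 2 statements merged into one kernel-verified Lean document; each statement's English description precedes it below -/
import Mathlib

section
/- A configuration belongs to the limit set of a cellular automaton if and only if it contains no orphan of any order, where an orphan of order n is a finite word having no preimage word under the n-fold application of the local rule. -/
/-- A one-dimensional cellular automaton: finite state set `Q`,
radius `r > 0` and local rule `δ`. -/
structure CellularAutomaton (Q : Type) where
  r : ℕ
  r_pos : 0 < r
  δ : (Fin (2 * r + 1) → Q) → Q

namespace CellularAutomaton

variable {Q : Type} (A : CellularAutomaton Q)

/-- The global transition map induced by the local rule. -/
def step (c : ℤ → Q) : ℤ → Q := fun i => A.δ fun j => c (i - (A.r : ℤ) + (j : ℤ))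

/-- The limit set `Λ(F) = ⋂ₖ F^k(Q^ℤ)`. -/
def limitSet : Set (ℤ → Q) := ⋂ k : ℕ, A.step^[k] '' Set.univ

end CellularAutomaton
namespace CellularAutomaton

variable {Q : Type} (A : CellularAutomaton Q)

/-- One application of the local rule to a finite word, shrinking it by `2r`. -/
def applyWord (m : ℕ) (u : Fin (m + 2 * A.r) → Q) : Fin m → Q := fun i =>
  A.δ fun j => u ⟨(i : ℕ) + (j : ℕ), by omega⟩

/-- `n`-fold application of the local rule to a finite word. -/
def applyWordN : (n : ℕ) → (m : ℕ) → (Fin (m + 2 * n * A.r) → Q) → Fin m → Q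
  | 0, m, u => fun i => u (Fin.cast (by ring) i)
  | n + 1, m, u =>
      A.applyWord m
        (applyWordN n (m + 2 * A.r) fun i => u (Fin.cast (by ring) i))

/-- `w` is an orphan of order `n`: no word of length `m + 2nr` maps onto it
under `n` applications of the local rule. -/
def IsOrphan (n m : ℕ) (w : Fin m → Q) : Prop :=
  ¬ ∃ u : Fin (m + 2 * n * A.r) → Q, A.applyWordN n m u = w

/-- A configuration contains a finite word. -/
def Contains {m : ℕ} (c : ℤ → Q) (w : Fin m → Q) : Prop :=
  ∃ k : ℤ, ∀ i : Fin m, c (k + (i : ℤ)) = w i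

end CellularAutomaton

namespace CellularAutomaton

variable {Q : Type} (A : CellularAutomaton Q)

lemma applyWordN_window (n : ℕ) (d : ℤ → Q) : ∀ (m : ℕ) (k : ℤ)
    (u : Fin (m + 2 * n * A.r) → Q),
    (∀ i, u i = d (k - (n : ℤ) * A.r + (i : ℤ))) →
      A.applyWordN n m u = fun i : Fin m => A.step^[n] d (k + (i : ℤ)) := by
  induction n with
  | zero =>
    intro m k u hu
    funext i
    simp only [applyWordN, Function.iterate_zero, id_eq]
    rw [hu]
    congr 1
    push_cast [Fin.coe_cast]
    ring
  | succ n ih =>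
    intro m k u hu
    funext i
    simp only [applyWordN]
    rw [ih (m + 2 * A.r) (k - A.r) _ (by
      intro t
      rw [hu]
      congr 1
      push_cast [Fin.coe_cast]
      ring)]
    simp only [applyWord]
    rw [Function.iterate_succ_apply', step]
    congr 1
    funext j
    congr 1
    push_cast
    ring

lemma exists_partial [Nonempty Q] (n m : ℕ) (c : ℤ → Q)
    (u : Fin (2 * m + 1 + 2 * n * A.r) → Q)
    (hu : A.applyWordN n (2 * m + 1) u = fun i : Fin (2 * m + 1) => c (-(m : ℤ) + (i : ℤ))) :
    ∃ d : ℤ → Q, ∀ i : ℤ, -(m : ℤ) ≤ i → i ≤ m → A.step^[n] d i = c i := by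
  refine ⟨fun j => u ⟨min (j + m + (n * A.r : ℕ)).toNat (2 * m + 2 * n * A.r), by omega⟩, ?_⟩
  intro i h1 h2
  have key := A.applyWordN_window n
      (fun j => u ⟨min (j + m + (n * A.r : ℕ)).toNat (2 * m + 2 * n * A.r), by omega⟩)
      (2 * m + 1) (-(m : ℤ)) u (by
    intro t
    congr 1
    apply Fin.ext
    simp only
    have ht : (t : ℕ) < 2 * m + 1 + 2 * n * A.r := t.isLt
    have : (-(m : ℤ) - (n : ℤ) * A.r + (t : ℤ)) + m + ((n * A.r : ℕ) : ℤ) = (t : ℤ) := by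
      push_cast; ring
    rw [this]
    omega)
  rw [hu] at key
  have hlt : (i + m).toNat < 2 * m + 1 := by omega
  have := congrFun key ⟨(i + m).toNat, hlt⟩
  simp only at this
  have h3 : (-(m : ℤ) + (((i + m).toNat : ℕ) : ℤ)) = i := by omega
  rw [h3] at this
  exact this.symm

lemma exists_preimage [Fintype Q] (n : ℕ) (c : ℤ → Q)
    (hd : ∀ m : ℕ, ∃ d : ℤ → Q, ∀ i : ℤ, -(m : ℤ) ≤ i → i ≤ m → A.step^[n] d i = c i) :
    ∃ d : ℤ → Q, A.step^[n] d = c := by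
  choose e he using hd
  set U : Ultrafilter ℕ := Ultrafilter.of Filter.atTop with hUdef
  have hatTop : ∀ s : Set ℕ, s ∈ Filter.atTop → s ∈ U := fun s hs =>
    Ultrafilter.of_le Filter.atTop hs
  have hch : ∀ j : ℤ, ∃ q : Q, {m | e m j = q} ∈ U := by
    intro j
    by_contra hcon
    push_neg at hcon
    have h1 : ∀ q : Q, {m | e m j = q}ᶜ ∈ U := fun q =>
      Ultrafilter.compl_mem_iff_notMem.mpr (hcon q)
    have h2 : (⋂ q : Q, {m | e m j = q}ᶜ) ∈ U := Filter.iInter_mem.mpr h1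
    have h3 : (⋂ q : Q, {m | e m j = q}ᶜ) = ∅ := by
      ext m; simp
    rw [h3] at h2
    exact Filter.empty_notMem (U : Filter ℕ) h2
  choose d hdq using hch
  refine ⟨d, funext fun i => ?_⟩
  have hW : ({m | i.natAbs ≤ m} ∩
      ⋂ t : Fin (1 + 2 * n * A.r), {m | e m (i - (n : ℤ) * A.r + (t : ℤ)) =
        d (i - (n : ℤ) * A.r + (t : ℤ))}) ∈ U :=
    Filter.inter_mem (hatTop _ (Filter.mem_atTop _)) (Filter.iInter_mem.mpr fun t => hdq _)
  obtain ⟨m, hm1, hm2⟩ := Filter.nonempty_of_mem hW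
  simp only [Set.mem_iInter, Set.mem_setOf_eq] at hm1 hm2
  have k1 := A.applyWordN_window n d 1 i (fun t => d (i - (n : ℤ) * A.r + (t : ℤ)))
    (fun t => rfl)
  have k2 := A.applyWordN_window n (e m) 1 i (fun t => e m (i - (n : ℤ) * A.r + (t : ℤ)))
    (fun t => rfl)
  have heq : (fun t : Fin (1 + 2 * n * A.r) => d (i - (n : ℤ) * A.r + (t : ℤ))) =
      fun t : Fin (1 + 2 * n * A.r) => e m (i - (n : ℤ) * A.r + (t : ℤ)) :=
    funext fun t => (hm2 t).symm
  have hz : A.step^[n] d (i + ((⟨0, by omega⟩ : Fin 1) : ℤ)) =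
      A.step^[n] (e m) (i + ((⟨0, by omega⟩ : Fin 1) : ℤ)) := by
    rw [← congrFun k1 ⟨0, by omega⟩, ← congrFun k2 ⟨0, by omega⟩, heq]
  simp only [Fin.val_mk, Int.ofNat_zero, Nat.cast_zero, add_zero] at hz
  rw [hz]
  exact he m i (by omega) (by omega)

end CellularAutomaton

theorem mem_limitSet_iff_no_orphan {Q : Type} [Fintype Q] [Nonempty Q]
    (A : CellularAutomaton Q) (c : ℤ → Q) :
    c ∈ A.limitSet ↔
      ¬ ∃ (n m : ℕ) (w : Fin m → Q), 1 ≤ n ∧ A.IsOrphan n m w ∧ CellularAutomaton.Contains c w := by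
  rw [CellularAutomaton.limitSet, Set.mem_iInter]
  constructor
  · rintro hc ⟨n, m, w, hn, horph, k, hw⟩
    obtain ⟨d, -, hd⟩ := hc n
    refine horph ⟨fun i => d (k - (n : ℤ) * A.r + (i : ℤ)), ?_⟩
    rw [A.applyWordN_window n d m k _ (fun i => rfl)]
    funext i
    rw [funext_iff] at hd
    rw [hd (k + (i : ℤ))]
    exact hw i
  · intro h n
    rcases Nat.eq_zero_or_pos n with h0 | hn
    · subst h0; exact ⟨c, trivial, rfl⟩
    have hu : ∀ m : ℕ, ∃ u : Fin (2 * m + 1 + 2 * n * A.r) → Q,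
        A.applyWordN n (2 * m + 1) u = fun i : Fin (2 * m + 1) => c (-(m : ℤ) + (i : ℤ)) := by
      intro m
      by_contra hcon
      exact h ⟨n, 2 * m + 1, _, hn, hcon, ⟨-(m : ℤ), fun i => rfl⟩⟩
    have hpart : ∀ m : ℕ, ∃ d : ℤ → Q, ∀ i : ℤ, -(m : ℤ) ≤ i → i ≤ m →
        A.step^[n] d i = c i := by
      intro m
      obtain ⟨u, hu⟩ := hu m
      exact A.exists_partial n m c u hu
    obtain ⟨d, hd⟩ := A.exists_preimage n c hpart
    exact ⟨d, trivial, hd⟩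
end

section
/- If F : Q^ℤ → Q^ℤ is the global map of a cellular automaton and F is injective, then F is surjective, and hence Λ(F) = Q^ℤ. -/
/-- Configurations of period `n`. -/
def CAPer {Q : Type} (n : ℕ) : Set (ℤ → Q) := {c | ∀ i : ℤ, c (i + n) = c i}

lemma caper_shift {Q : Type} {n : ℕ} {c : ℤ → Q} (hc : c ∈ CAPer n) :
    ∀ (m i : ℤ), c (i + n * m) = c i := by
  intro m
  induction m using Int.induction_on with
  | zero => simp
  | succ k ih =>
    intro i
    have := hc (i + n * k)
    rw [show i + n * (k + 1) = i + n * k + n by ring, this, ih]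
  | pred k ih =>
    intro i
    calc c (i + n * (-(k:ℤ) - 1)) = c (i + n * (-(k:ℤ) - 1) + n) := (hc _).symm
      _ = c (i + n * (-(k:ℤ))) := by congr 1; ring
      _ = c i := ih i

lemma caper_emod {Q : Type} {n : ℕ} {c : ℤ → Q} (hc : c ∈ CAPer n) (i : ℤ) :
    c i = c (i % n) := by
  conv_lhs => rw [← Int.emod_add_mul_ediv i n]
  rw [show i % n + n * (i / n) = i % n + (n : ℤ) * (i / n) by ring]
  exact caper_shift hc _ _

lemma caper_finite {Q : Type} [Fintype Q] (n : ℕ) (hn : 0 < n) :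
    (CAPer (Q := Q) n).Finite := by
  apply Set.Finite.of_finite_image (f := fun c (k : Fin n) => c k)
    (Set.toFinite _)
  intro c1 h1 c2 h2 h
  funext i
  have hm0 : 0 ≤ i % n := Int.emod_nonneg i (by exact_mod_cast hn.ne')
  have hmlt : i % n < n := Int.emod_lt_of_pos i (by exact_mod_cast hn)
  have key : c1 (i % n) = c2 (i % n) := by
    have := congrFun h ⟨(i % n).toNat, by omega⟩
    simpa [Int.toNat_of_nonneg hm0] using this
  rw [caper_emod h1 i, caper_emod h2 i, key]

lemma caper_mapsTo {Q : Type} (A : CellularAutomaton Q) (n : ℕ) :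
    Set.MapsTo A.step (CAPer n) (CAPer n) := by
  intro c hc i
  show A.δ _ = A.δ _
  congr 1
  funext j
  rw [show i + (n : ℤ) - (A.r : ℤ) + (j : ℤ) = (i - A.r + j) + n by ring]
  exact hc _

theorem injective_step_surjective {Q : Type} [Fintype Q] [Nonempty Q]
    (A : CellularAutomaton Q) (hinj : Function.Injective A.step) :
    Function.Surjective A.step ∧ A.limitSet = Set.univ := by
  letI : TopologicalSpace Q := ⊥
  haveI : DiscreteTopology Q := ⟨rfl⟩
  -- step is continuous
  have hcont : Continuous A.step := by
    apply continuous_pi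
    intro i
    exact (continuous_of_discreteTopology (α := Fin (2 * A.r + 1) → Q)).comp
      (continuous_pi fun j => continuous_apply _)
  have hclosed : IsClosed (Set.range A.step) := by
    have : IsCompact (Set.range A.step) :=
      isCompact_range hcont
    exact this.isClosed
  -- every periodic configuration is in the range
  have hper : ∀ n : ℕ, 0 < n → CAPer (Q := Q) n ⊆ Set.range A.step := by
    intro n hn c hc
    have hbij := ((caper_finite n hn).injOn_iff_bijOn_of_mapsTo
      (caper_mapsTo A n)).mp hinj.injOn
    obtain ⟨d, _, hd⟩ := hbij.surjOn hc
    exact ⟨d, hd⟩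
  -- periodic configurations are dense
  have hsurj : Function.Surjective A.step := by
    intro c
    have hmem : c ∈ Set.range A.step := by
      rw [← hclosed.closure_eq]
      rw [mem_closure_iff]
      intro U hU hcU
      obtain ⟨I, u, hu, hsub⟩ := isOpen_pi_iff.mp hU c hcU
      set N : ℕ := I.sup (fun i => i.natAbs) + 1 with hN
      set n : ℕ := 2 * N with hn
      set p : ℤ → Q := fun i => c ((i + N) % n - N) with hp
      have hpper : p ∈ CAPer (Q := Q) n := by
        intro i
        simp only [hp]
        congr 2
        rw [show i + (n:ℤ) + N = (i + N) + 1 * n by push_cast; ring, Int.add_mul_emod_self_right]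
      have hagree : ∀ i : ℤ, -(N:ℤ) ≤ i → i < N → p i = c i := by
        intro i h1 h2
        simp only [hp]
        rw [Int.emod_eq_of_lt (by omega) (by push_cast [hn]; omega)]
        congr 1; ring
      refine ⟨p, hsub fun i hi => ?_, hper n (by omega) hpper⟩
      have hiN : i.natAbs < N := by
        have h := Finset.le_sup (f := fun i : ℤ => i.natAbs) hi
        omega
      rw [hagree i (by omega) (by omega)]
      exact (hu i hi).2
    exact hmem
  refine ⟨hsurj, ?_⟩
  have hiter : ∀ k : ℕ, A.step^[k] '' Set.univ = Set.univ := by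
    intro k
    rw [Set.image_univ, Set.range_eq_univ.mpr (hsurj.iterate k)]
  rw [CellularAutomaton.limitSet]
  simp [hiter]
end
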